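/- arXiv:0807.0592 — 2 statements merged into one kernel-verified Lean document; each statement's English description precedes it below -/
import Mathlib

section
/- Let q be a prime power and d ≥ 2. If E ⊆ F_q^d satisfies |E| ≥ C q^{d(k-1)/k + (k-1)/2 + 1/k} for a sufficiently large constant C, where 0 < k(k-1)/2 < d, then the number λ_k of k-tuples (x^1,...,x^k) ∈ E^k with x^i · x^j = 0 for all 1 ≤ i < j ≤ k equals (1+o(1)) |E|^k q^{-k(k-1)/2}. -/
/-!
Count the tuples one vector at a time. If `λ_j` is the number of orthogonal `j`-tuples from `E`,
then `λ_{j+1} = ∑_v #{y ∈ E | y ⟂ v_1, …, v_j}` over the orthogonal `j`-tuples `v`. Expanding the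
conditions `y ⟂ v_i` in a primitive additive character `ψ` gives
`q^j λ_{j+1} = λ_j |E| + ∑_v R(v)`, where `R(v) = ∑_{t ≠ 0} Ê(∑ t_i v_i)` and
`Ê(z) = ∑_{y ∈ E} ψ(z · y)`. By Cauchy–Schwarz and Plancherel over all `v ∈ (F^d)^j`,
`|∑_v R(v)|² ≤ λ_j q^{jd} N`, where `N` counts the `(t, t', y, y')` with `t, t' ≠ 0`, `y, y' ∈ E`
and `t_i y = t'_i y'` for all `i`. Such `y, y'` are collinear, so `N ≤ q^{2j} + q^{j+1} |E|`.
With `C = 4/μ`, the relative error `|λ_j / M_j - 1|`, where `M_j = |E|^j q^{-j(j-1)/2}`, then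
grows by at most `μ 2^{-j}` from `j` to `j + 1`, so it stays below `μ`.
-/

open Finset

/-- The number of `k`-tuples of mutually orthogonal vectors of `E`. -/
noncomputable def orthoTuples {F : Type} [Field F] [Fintype F] {d : ℕ}
    (E : Finset (Fin d → F)) (k : ℕ) : ℕ :=
  Nat.card {x : Fin k → (Fin d → F) //
    (∀ i, x i ∈ E) ∧ ∀ i j : Fin k, i < j → ∑ m, x i m * x j m = 0}

lemma AddChar.map_sum_eq_prod {ι A M : Type*} [AddCommMonoid A] [CommMonoid M]
    (ψ : AddChar A M) (s : Finset ι) (f : ι → A) : ψ (∑ i ∈ s, f i) = ∏ i ∈ s, ψ (f i) := by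
  classical
  induction s using Finset.induction_on with
  | empty => simp
  | insert a s ha ih => rw [sum_insert ha, prod_insert ha, map_add_eq_mul, ih]

lemma Fintype.sum_prod_eq_ite {κ α β R : Type*} [Fintype κ] [DecidableEq κ] [Fintype α]
    [Zero β] [DecidableEq β] [CommSemiring R] (f : κ → α → R) (w : κ → β) (c : R)
    (hf : ∀ m, ∑ a, f m a = if w m = 0 then c else 0) :
    ∑ x : κ → α, ∏ m, f m (x m) = if w = 0 then c ^ Fintype.card κ else 0 := by
  simp_rw [← Fintype.prod_sum, hf]
  rw [prod_ite_zero, prod_const, card_univ]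
  simp [funext_iff]

section ExpSum

variable {R : Type*} [CommRing R] {ι n : Type*} [Fintype ι] [Fintype n]

lemma sum_smul_dotProduct (t : ι → R) (v : ι → n → R) (y : n → R) :
    (∑ i, t i • v i) ⬝ᵥ y = t ⬝ᵥ fun i => v i ⬝ᵥ y := by
  simp only [sum_dotProduct, smul_dotProduct, smul_eq_mul]
  rfl

lemma sum_smul_dotProduct_eq_sum (t : ι → R) (v : ι → n → R) (y : n → R) :
    (∑ i, t i • v i) ⬝ᵥ y = ∑ i, v i ⬝ᵥ (t i • y) := by
  rw [sum_dotProduct]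
  exact sum_congr rfl fun i _ => by rw [smul_dotProduct, dotProduct_smul, dotProduct_comm]

/-- `Ê` in the proof sketch above. -/
def expSum (ψ : AddChar R ℂ) (E : Finset (n → R)) (z : n → R) : ℂ := ∑ y ∈ E, ψ (z ⬝ᵥ y)

lemma expSum_zero (ψ : AddChar R ℂ) (E : Finset (n → R)) : expSum ψ E 0 = #E := by
  simp [expSum]

/-- `R(v)` in the proof sketch above. -/
def expSumErr [Fintype R] [DecidableEq R] [DecidableEq ι] (ψ : AddChar R ℂ) (E : Finset (n → R))
    (v : ι → n → R) : ℂ :=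
  ∑ t ∈ univ.erase (0 : ι → R), expSum ψ E (∑ i, t i • v i)

end ExpSum

section CharacterSums

variable {R : Type*} [CommRing R] [Fintype R] [DecidableEq R] {ψ : AddChar R ℂ}
  {ι n : Type*} [Fintype ι] [DecidableEq ι] [Fintype n] [DecidableEq n]

lemma AddChar.sum_apply_dotProduct (hψ : ψ.IsPrimitive) (w : n → R) :
    ∑ x : n → R, ψ (x ⬝ᵥ w) = if w = 0 then (Fintype.card R : ℂ) ^ Fintype.card n else 0 := by
  simp_rw [dotProduct, AddChar.map_sum_eq_prod]
  exact Fintype.sum_prod_eq_ite _ w _ fun m => by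
    rw [AddChar.sum_mulShift _ hψ, Nat.cast_ite, Nat.cast_zero]

lemma AddChar.sum_apply_sum_dotProduct (hψ : ψ.IsPrimitive) (u : ι → n → R) :
    ∑ v : ι → n → R, ψ (∑ i, v i ⬝ᵥ u i) =
      if u = 0 then (Fintype.card R : ℂ) ^ (Fintype.card n * Fintype.card ι) else 0 := by
  simp_rw [AddChar.map_sum_eq_prod]
  rw [Fintype.sum_prod_eq_ite _ u _ fun i => AddChar.sum_apply_dotProduct hψ (u i), pow_mul]

omit [DecidableEq n] in
lemma sum_expSum_sum_smul (hψ : ψ.IsPrimitive) (E : Finset (n → R)) (v : ι → n → R) :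
    ∑ t : ι → R, expSum ψ E (∑ i, t i • v i) =
      (Fintype.card R : ℂ) ^ Fintype.card ι * #{y ∈ E | ∀ i, v i ⬝ᵥ y = 0} := by
  simp_rw [expSum, sum_smul_dotProduct]
  rw [sum_comm]
  simp_rw [AddChar.sum_apply_dotProduct hψ, funext_iff, Pi.zero_apply]
  rw [sum_ite, sum_const_zero, add_zero, sum_const, nsmul_eq_mul, mul_comm]

omit [DecidableEq n] in
lemma card_pow_mul_card_filter_eq (hψ : ψ.IsPrimitive) (E : Finset (n → R)) (v : ι → n → R) :
    (Fintype.card R : ℂ) ^ Fintype.card ι * #{y ∈ E | ∀ i, v i ⬝ᵥ y = 0} =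
      #E + expSumErr ψ E v := by
  rw [← sum_expSum_sum_smul hψ, ← add_sum_erase _ _ (mem_univ 0)]
  simp [expSum_zero, expSumErr]

lemma sum_expSum_mul_conj (hψ : ψ.IsPrimitive) (E : Finset (n → R)) (t t' : ι → R) :
    ∑ v : ι → n → R,
        expSum ψ E (∑ i, t i • v i) * starRingEnd ℂ (expSum ψ E (∑ i, t' i • v i)) =
      (Fintype.card R : ℂ) ^ (Fintype.card n * Fintype.card ι) *
        #{p ∈ E ×ˢ E | ∀ i, t i • p.1 = t' i • p.2} := by
  have expand (v : ι → n → R) :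
      expSum ψ E (∑ i, t i • v i) * starRingEnd ℂ (expSum ψ E (∑ i, t' i • v i)) =
        ∑ p ∈ E ×ˢ E, ψ (∑ i, v i ⬝ᵥ (t i • p.1 - t' i • p.2)) := by
    rw [expSum, expSum, map_sum, sum_mul_sum, sum_product]
    refine sum_congr rfl fun y _ => sum_congr rfl fun y' _ => ?_
    rw [← AddChar.map_neg_eq_conj, ← AddChar.map_add_eq_mul, ← sub_eq_add_neg,
      sum_smul_dotProduct_eq_sum, sum_smul_dotProduct_eq_sum, ← sum_sub_distrib]
    simp_rw [dotProduct_sub]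
  have hzero (y y' : n → R) :
      (fun i => t i • y - t' i • y') = 0 ↔ ∀ i, t i • y = t' i • y' :=
    funext_iff.trans (forall_congr' fun i => sub_eq_zero)
  rw [sum_congr rfl fun v _ => expand v, sum_comm]
  simp_rw [AddChar.sum_apply_sum_dotProduct hψ, hzero]
  rw [sum_ite, sum_const_zero, add_zero, sum_const, nsmul_eq_mul, mul_comm]

lemma sum_sq_norm_expSumErr (hψ : ψ.IsPrimitive) (E : Finset (n → R)) :
    ∑ v : ι → n → R, ‖expSumErr ψ E v‖ ^ 2 =
      (Fintype.card R : ℝ) ^ (Fintype.card n * Fintype.card ι) *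
        ∑ t ∈ univ.erase (0 : ι → R), ∑ t' ∈ univ.erase (0 : ι → R),
          (#{p ∈ E ×ˢ E | ∀ i, t i • p.1 = t' i • p.2} : ℝ) := by
  have h : ∑ v : ι → n → R, ((‖expSumErr ψ E v‖ ^ 2 : ℝ) : ℂ) =
      (Fintype.card R : ℂ) ^ (Fintype.card n * Fintype.card ι) *
        ∑ t ∈ univ.erase (0 : ι → R), ∑ t' ∈ univ.erase (0 : ι → R),
          (#{p ∈ E ×ˢ E | ∀ i, t i • p.1 = t' i • p.2} : ℂ) := by
    simp_rw [Complex.ofReal_pow, ← Complex.mul_conj', expSumErr, map_sum, sum_mul_sum]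
    rw [sum_comm]
    simp_rw [sum_comm (s := univ (α := ι → n → R)), sum_expSum_mul_conj hψ, ← mul_sum]
  exact_mod_cast h

end CharacterSums

section Collinear

variable {F : Type*} [Field F] [Fintype F] [DecidableEq F] {ι n : Type*} [Fintype ι]
  [DecidableEq ι] [Fintype n]

lemma card_filter_smul_eq_smul_le (y y' : n → F) :
    #{tt' ∈ univ.erase (0 : ι → F) ×ˢ univ.erase (0 : ι → F) | ∀ i, tt'.1 i • y = tt'.2 i • y'} ≤
      (if y = 0 ∧ y' = 0 then Fintype.card F ^ (2 * Fintype.card ι) else 0) +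
        if ∃ c : F, y = c • y' then Fintype.card F ^ Fintype.card ι else 0 := by
  by_cases hc : ∃ c : F, y = c • y'
  swap
  · -- a coordinate `t i ≠ 0` would give `y = ((t i)⁻¹ * t' i) • y'`
    rw [card_eq_zero.2 (filter_eq_empty_iff.2 fun tt' htt' hsmul => hc ?_)]
    · exact Nat.zero_le _
    obtain ⟨i, hi⟩ := Function.ne_iff.1 (mem_erase.1 (mem_product.1 htt').1).1
    exact ⟨(tt'.1 i)⁻¹ * tt'.2 i, by rw [mul_smul, ← hsmul i, inv_smul_smul₀ hi]⟩
  by_cases hy' : y' = 0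
  · obtain ⟨c, rfl⟩ := hc
    subst hy'
    calc _ ≤ #(univ ×ˢ univ : Finset ((ι → F) × (ι → F))) :=
          (card_filter_le _ _).trans (card_le_card (product_subset_product (erase_subset _ _)
            (erase_subset _ _)))
      _ ≤ _ := by simp [two_mul, pow_add]
  · -- `t` determines `t'`, since `c ↦ c • y'` is injective
    calc _ ≤ #(univ : Finset (ι → F)) := by
          refine card_le_card_of_injOn Prod.fst (fun _ _ => mem_coe.2 (mem_univ _)) ?_
          rintro ⟨t, s⟩ hts ⟨t₂, s₂⟩ hts₂ (rfl : t = t₂)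
          simp only [coe_filter, Set.mem_ofPred_eq] at hts hts₂
          exact Prod.ext rfl
            (funext fun i => smul_left_injective F hy' ((hts.2 i).symm.trans (hts₂.2 i)))
      _ ≤ _ := by simp [hc]

lemma sum_card_filter_smul_eq_smul_le (E : Finset (n → F)) :
    ∑ t ∈ univ.erase (0 : ι → F), ∑ t' ∈ univ.erase (0 : ι → F),
        #{p ∈ E ×ˢ E | ∀ i, t i • p.1 = t' i • p.2} ≤
      Fintype.card F ^ (2 * Fintype.card ι) + Fintype.card F ^ (Fintype.card ι + 1) * #E := by
  calc _ = ∑ p ∈ E ×ˢ E, #{tt' ∈ univ.erase (0 : ι → F) ×ˢ univ.erase (0 : ι → F) |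
          ∀ i, tt'.1 i • p.1 = tt'.2 i • p.2} := by
        simp_rw [card_filter, sum_product (s := univ.erase (0 : ι → F))]
        simp_rw [sum_comm (s := E ×ˢ E)]
    _ ≤ ∑ p ∈ E ×ˢ E, ((if p.1 = 0 ∧ p.2 = 0 then Fintype.card F ^ (2 * Fintype.card ι) else 0) +
          if ∃ c : F, p.1 = c • p.2 then Fintype.card F ^ Fintype.card ι else 0) :=
        sum_le_sum fun p _ => card_filter_smul_eq_smul_le p.1 p.2
    _ = #{p ∈ E ×ˢ E | p.1 = 0 ∧ p.2 = 0} * Fintype.card F ^ (2 * Fintype.card ι) +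
          #{p ∈ E ×ˢ E | ∃ c : F, p.1 = c • p.2} * Fintype.card F ^ Fintype.card ι := by
        rw [sum_add_distrib, ← sum_filter, ← sum_filter, sum_const, sum_const, smul_eq_mul,
          smul_eq_mul]
    _ ≤ 1 * Fintype.card F ^ (2 * Fintype.card ι) +
          #((univ : Finset F) ×ˢ E) * Fintype.card F ^ Fintype.card ι := by
        gcongr
        · exact card_le_one.2 fun a ha b hb => by
            simp only [mem_filter] at ha hb
            exact Prod.ext (ha.2.1.trans hb.2.1.symm) (ha.2.2.trans hb.2.2.symm)
        · refine card_le_card_of_surjOn (fun cy => (cy.1 • cy.2, cy.2)) ?_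
          rintro ⟨y, y'⟩ hyy'
          simp only [coe_filter, mem_product, Set.mem_ofPred_eq] at hyy'
          obtain ⟨⟨-, hy'⟩, c, rfl⟩ := hyy'
          exact ⟨(c, y'), by simp [hy'], rfl⟩
    _ = _ := by rw [card_product, card_univ, pow_succ]; ring

end Collinear

section Estimates

lemma abs_sub_le_of_mul_sub_le {Q n l l' M M' a b : ℝ} (hQ : 0 < Q) (hn : 0 ≤ n)
    (hM' : Q * M' = n * M) (hl : |l - M| ≤ a * M) (hl' : |Q * l' - l * n| ≤ b * (Q * M')) :
    |l' - M'| ≤ (a + b) * M' := by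
  refine le_of_mul_le_mul_left ?_ hQ
  calc Q * |l' - M'| = |(Q * l' - l * n) + n * (l - M)| := by
        rw [← abs_of_pos hQ, ← abs_mul, abs_of_pos hQ]
        congr 1
        linear_combination -hM'
    _ ≤ |Q * l' - l * n| + n * |l - M| := by
        rw [← abs_of_nonneg hn, ← abs_mul, abs_of_nonneg hn]
        exact abs_add_le _ _
    _ ≤ b * (Q * M') + n * (a * M) := by gcongr
    _ = Q * ((a + b) * M') := by linear_combination -a * hM'

variable {q n μ : ℝ} {d j : ℕ}

lemma four_pow_mul_le_sq_mul_pow (hq : 0 ≤ q) (hμ0 : 0 < μ) (hμ1 : μ ≤ 1) (hj : 1 ≤ j)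
    (hsize : (4 / μ) ^ (j + 1) * q ^ (d * j + (j + 1).choose 2 + 1) ≤ n ^ (j + 1)) :
    4 ^ (j + 1) * q ^ (d * j + (j + 1).choose 2 + 1) ≤ μ ^ 2 * n ^ (j + 1) :=
  calc 4 ^ (j + 1) * q ^ (d * j + (j + 1).choose 2 + 1)
      = μ ^ (j + 1) * ((4 / μ) ^ (j + 1) * q ^ (d * j + (j + 1).choose 2 + 1)) := by
        rw [← mul_assoc, ← mul_pow, mul_div_cancel₀ _ hμ0.ne']
    _ ≤ μ ^ 2 * ((4 / μ) ^ (j + 1) * q ^ (d * j + (j + 1).choose 2 + 1)) :=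
        mul_le_mul_of_nonneg_right (pow_le_pow_of_le_one hμ0.le hμ1 (by omega)) (by positivity)
    _ ≤ μ ^ 2 * n ^ (j + 1) := mul_le_mul_of_nonneg_left hsize (by positivity)

lemma pow_pred_le_of_mul_pow_le (hq : 1 ≤ q) (hn : 0 ≤ n) (hjd : j ≤ d) {c : ℝ} (hc : 1 ≤ c)
    (hsize : c * q ^ (d * j + (j + 1).choose 2 + 1) ≤ n ^ (j + 1)) : q ^ (j - 1) ≤ n := by
  have hexp : (j - 1) * (j + 1) ≤ d * j + (j + 1).choose 2 + 1 := by
    have : (j - 1) * (j + 1) ≤ j * j := by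
      rcases j with _ | j
      · simp
      · simp only [Nat.add_sub_cancel]; nlinarith
    nlinarith
  rw [← pow_le_pow_iff_left₀ (by positivity) hn (Nat.succ_ne_zero j), ← pow_mul]
  calc q ^ ((j - 1) * (j + 1)) ≤ q ^ (d * j + (j + 1).choose 2 + 1) := pow_le_pow_right₀ hq hexp
    _ ≤ c * q ^ (d * j + (j + 1).choose 2 + 1) := le_mul_of_one_le_left (by positivity) hc
    _ ≤ n ^ (j + 1) := hsize

lemma abs_pow_mul_sub_mul_le {l l' : ℝ} (hq : 1 ≤ q) (hn : 0 ≤ n) (hμ0 : 0 < μ) (hμ1 : μ ≤ 1)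
    (hj : 1 ≤ j) (hjd : j ≤ d)
    (hsize : (4 / μ) ^ (j + 1) * q ^ (d * j + (j + 1).choose 2 + 1) ≤ n ^ (j + 1))
    (hlM : l ≤ 2 * (n ^ j / q ^ j.choose 2))
    (hrec : (q ^ j * l' - l * n) ^ 2 ≤ l * (q ^ (d * j) * (q ^ (2 * j) + q ^ (j + 1) * n))) :
    |q ^ j * l' - l * n| ≤ μ / 2 ^ j * (n * (n ^ j / q ^ j.choose 2)) := by
  set M := n ^ j / q ^ j.choose 2 with hM
  have hq0 : 0 < q := by linarith
  have hqn : q ^ (2 * j) ≤ q ^ (j + 1) * n := by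
    rw [show 2 * j = (j + 1) + (j - 1) by omega, pow_add]
    gcongr
    exact pow_pred_le_of_mul_pow_le hq hn hjd (one_le_pow₀ ((one_le_div hμ0).2 (by linarith))) hsize
  have hkey : 4 * q ^ (d * j + j + 1) ≤ μ ^ 2 / 4 ^ j * (n * M) := by
    have h := four_pow_mul_le_sq_mul_pow hq0.le hμ0 hμ1 hj hsize
    rw [show (j + 1).choose 2 = j + j.choose 2 by simp [Nat.choose_succ_succ']] at h
    rw [hM, ← mul_div_assoc, div_mul_div_comm, le_div_iff₀ (by positivity)]
    calc 4 * q ^ (d * j + j + 1) * (4 ^ j * q ^ j.choose 2)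
        = 4 ^ (j + 1) * q ^ (d * j + (j + j.choose 2) + 1) := by ring
      _ ≤ μ ^ 2 * n ^ (j + 1) := h
      _ = μ ^ 2 * (n * n ^ j) := by ring
  refine abs_le_of_sq_le_sq ?_ (by positivity)
  calc (q ^ j * l' - l * n) ^ 2 ≤ l * (q ^ (d * j) * (q ^ (2 * j) + q ^ (j + 1) * n)) := hrec
    _ ≤ 2 * M * (q ^ (d * j) * (2 * (q ^ (j + 1) * n))) := by gcongr; linarith
    _ = n * M * (4 * q ^ (d * j + j + 1)) := by ring
    _ ≤ n * M * (μ ^ 2 / 4 ^ j * (n * M)) := by gcongr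
    _ = (μ / 2 ^ j * (n * M)) ^ 2 := by
      rw [show (4 : ℝ) ^ j = (2 ^ j) ^ 2 by rw [← pow_mul, mul_comm, pow_mul]; norm_num]
      ring

lemma abs_sub_div_pow_choose_two_le_succ {l l' : ℝ} (hq : 1 ≤ q) (hn : 0 ≤ n) (hμ0 : 0 < μ)
    (hμ1 : μ ≤ 1) (hj : 1 ≤ j) (hjd : j ≤ d)
    (hsize : (4 / μ) ^ (j + 1) * q ^ (d * j + (j + 1).choose 2 + 1) ≤ n ^ (j + 1))
    (hl : |l - n ^ j / q ^ j.choose 2| ≤ μ * (1 - 2 / 2 ^ j) * (n ^ j / q ^ j.choose 2))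
    (hrec : (q ^ j * l' - l * n) ^ 2 ≤ l * (q ^ (d * j) * (q ^ (2 * j) + q ^ (j + 1) * n))) :
    |l' - n ^ (j + 1) / q ^ (j + 1).choose 2| ≤
      μ * (1 - 2 / 2 ^ (j + 1)) * (n ^ (j + 1) / q ^ (j + 1).choose 2) := by
  set M := n ^ j / q ^ j.choose 2 with hM
  have hq0 : 0 < q := by linarith
  have hM0 : 0 ≤ M := by positivity
  have hM' : q ^ j * (n ^ (j + 1) / q ^ (j + 1).choose 2) = n * M := by
    rw [hM, show (j + 1).choose 2 = j + j.choose 2 by simp [Nat.choose_succ_succ'], pow_add]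
    field_simp
    ring
  have hcoef : μ * (1 - 2 / 2 ^ j) ≤ 1 := by
    have : 0 ≤ 2 / (2 : ℝ) ^ j := by positivity
    nlinarith
  have hR := abs_pow_mul_sub_mul_le hq hn hμ0 hμ1 hj hjd hsize
    (by nlinarith [(abs_le.1 hl).2]) hrec
  rw [← hM'] at hR
  calc _ ≤ (μ * (1 - 2 / 2 ^ j) + μ / 2 ^ j) * (n ^ (j + 1) / q ^ (j + 1).choose 2) :=
        abs_sub_le_of_mul_sub_le (pow_pos hq0 j) hn hM' hl hR
    _ = _ := by
        rw [pow_succ]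
        field_simp
        ring

end Estimates

section OrthogonalTuples

variable {F : Type*} [CommRing F] [Fintype F] [DecidableEq F] {n : Type*} [Fintype n]
  [DecidableEq n]

def orthoTupleFinset (E : Finset (n → F)) (k : ℕ) : Finset (Fin k → n → F) :=
  {x | (∀ i, x i ∈ E) ∧ ∀ i j, i < j → x i ⬝ᵥ x j = 0}

lemma snoc_mem_orthoTupleFinset_iff {E : Finset (n → F)} {j : ℕ} (v : Fin j → n → F)
    (y : n → F) :
    Fin.snoc v y ∈ orthoTupleFinset E (j + 1) ↔
      v ∈ orthoTupleFinset E j ∧ y ∈ E ∧ ∀ i, v i ⬝ᵥ y = 0 := by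
  have hlast (i : Fin j) : ¬Fin.last j < i.castSucc := not_lt.2 (Fin.le_last _)
  simp [orthoTupleFinset, Fin.forall_fin_succ', hlast, forall_and]
  tauto

lemma card_orthoTupleFinset_succ (E : Finset (n → F)) (j : ℕ) :
    #(orthoTupleFinset E (j + 1)) = ∑ v ∈ orthoTupleFinset E j, #{y ∈ E | ∀ i, v i ⬝ᵥ y = 0} := by
  rw [← card_sigma]
  refine card_nbij' (fun x => ⟨Fin.init x, x (Fin.last j)⟩) (fun p => Fin.snoc p.1 p.2)
    (fun x hx => ?_) (fun p hp => ?_) (fun x _ => Fin.snoc_init_self x) (fun p _ => ?_)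
  · rw [mem_coe, ← Fin.snoc_init_self x, snoc_mem_orthoTupleFinset_iff] at hx
    simpa using hx
  · simpa [snoc_mem_orthoTupleFinset_iff] using hp
  · simp

lemma card_orthoTupleFinset_one (E : Finset (n → F)) : #(orthoTupleFinset E 1) = #E := by
  rw [card_orthoTupleFinset_succ]
  simp [orthoTupleFinset]

lemma card_pow_mul_card_orthoTupleFinset_succ {ψ : AddChar F ℂ} (hψ : ψ.IsPrimitive)
    (E : Finset (n → F)) (j : ℕ) :
    (Fintype.card F : ℂ) ^ j * #(orthoTupleFinset E (j + 1)) =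
      #(orthoTupleFinset E j) * #E + ∑ v ∈ orthoTupleFinset E j, expSumErr ψ E v := by
  have h (v : Fin j → n → F) : (Fintype.card F : ℂ) ^ j * #{y ∈ E | ∀ i, v i ⬝ᵥ y = 0} =
      #E + expSumErr ψ E v := by
    -- `convert` also reconciles the decidability instances of the two filters
    convert card_pow_mul_card_filter_eq hψ E v
    simp
  rw [card_orthoTupleFinset_succ, Nat.cast_sum, mul_sum]
  simp_rw [h]
  rw [sum_add_distrib, sum_const, nsmul_eq_mul]

end OrthogonalTuples

section Counting

variable {F : Type*} [Field F] [Fintype F] [DecidableEq F] {n : Type*} [Fintype n]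
  [DecidableEq n]

lemma sq_card_orthoTupleFinset_succ_sub_le (E : Finset (n → F)) (j : ℕ) :
    ((Fintype.card F : ℝ) ^ j * #(orthoTupleFinset E (j + 1)) - #(orthoTupleFinset E j) * #E) ^ 2 ≤
      #(orthoTupleFinset E j) * ((Fintype.card F : ℝ) ^ (Fintype.card n * j) *
        ((Fintype.card F : ℝ) ^ (2 * j) + (Fintype.card F : ℝ) ^ (j + 1) * #E)) := by
  set ψ := AddChar.FiniteField.primitiveChar_to_Complex F
  have hψ : ψ.IsPrimitive := AddChar.FiniteField.primitiveChar_to_Complex_isPrimitive F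
  set T := orthoTupleFinset E j
  have hrec : (((Fintype.card F : ℝ) ^ j * #(orthoTupleFinset E (j + 1)) - #T * #E : ℝ) : ℂ) =
      ∑ v ∈ T, expSumErr ψ E v := by
    push_cast
    rw [card_pow_mul_card_orthoTupleFinset_succ hψ]
    ring
  have hcount := sum_card_filter_smul_eq_smul_le (ι := Fin j) E
  rw [Fintype.card_fin] at hcount
  calc _ = ‖∑ v ∈ T, expSumErr ψ E v‖ ^ 2 := by
        rw [← hrec, Complex.norm_real, Real.norm_eq_abs, sq_abs]
    _ ≤ (∑ v ∈ T, ‖expSumErr ψ E v‖) ^ 2 := by gcongr; exact norm_sum_le _ _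
    _ ≤ #T * ∑ v ∈ T, ‖expSumErr ψ E v‖ ^ 2 := sq_sum_le_card_mul_sum_sq
    _ ≤ #T * ∑ v, ‖expSumErr ψ E v‖ ^ 2 := by
        gcongr
        exact subset_univ _
    _ ≤ _ := by
        rw [sum_sq_norm_expSumErr hψ, Fintype.card_fin]
        gcongr
        exact_mod_cast hcount

theorem abs_card_orthoTupleFinset_sub_le {μ : ℝ} (hμ0 : 0 < μ) (hμ1 : μ ≤ 1)
    (E : Finset (n → F)) {k : ℕ} (hk : 1 ≤ k) (hkn : k ≤ Fintype.card n)
    (hsize : ∀ i, 2 ≤ i → i ≤ k → (4 / μ) ^ i *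
      (Fintype.card F : ℝ) ^ (Fintype.card n * (i - 1) + i.choose 2 + 1) ≤ (#E : ℝ) ^ i) :
    |(#(orthoTupleFinset E k) : ℝ) - #E ^ k / (Fintype.card F : ℝ) ^ k.choose 2| ≤
      μ * (1 - 2 / 2 ^ k) * (#E ^ k / (Fintype.card F : ℝ) ^ k.choose 2) := by
  induction k, hk using Nat.le_induction with
  | base => simp [card_orthoTupleFinset_one]
  | succ j hj ih =>
    exact abs_sub_div_pow_choose_two_le_succ (by exact_mod_cast Fintype.card_pos)
      (Nat.cast_nonneg _) hμ0 hμ1 hj (by omega) (by simpa using hsize (j + 1) (by omega) le_rfl)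
      (ih (by omega) fun i hi hij => hsize i hi (by omega))
      (sq_card_orthoTupleFinset_succ_sub_le E j)

end Counting

lemma pow_le_pow_of_rpow_le {q n c : ℝ} {d k i : ℕ} (hq : 1 ≤ q) (hc : 0 ≤ c) (hd : 1 ≤ d)
    (hi : 1 ≤ i) (hik : i ≤ k)
    (h : c * q ^ ((d : ℝ) * ((k : ℝ) - 1) / k + ((k : ℝ) - 1) / 2 + 1 / k) ≤ n) :
    c ^ i * q ^ (d * (i - 1) + i.choose 2 + 1) ≤ n ^ i := by
  have hi' : (1 : ℝ) ≤ i := by exact_mod_cast hi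
  have hik' : (i : ℝ) ≤ k := by exact_mod_cast hik
  have hd' : (1 : ℝ) ≤ d := by exact_mod_cast hd
  have hk0 : (k : ℝ) ≠ 0 := (by linarith : (0 : ℝ) < k).ne'
  have hexp : (d : ℝ) * ((i : ℝ) - 1) / i + ((i : ℝ) - 1) / 2 + 1 / i ≤
      (d : ℝ) * ((k : ℝ) - 1) / k + ((k : ℝ) - 1) / 2 + 1 / k := by
    rw [← sub_nonneg]
    have : (d : ℝ) * ((k : ℝ) - 1) / k + ((k : ℝ) - 1) / 2 + 1 / k -
        ((d : ℝ) * ((i : ℝ) - 1) / i + ((i : ℝ) - 1) / 2 + 1 / i) =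
          (k - i) * (2 * (d - 1) + i * k) / (2 * i * k) := by
      field_simp
      ring
    rw [this]
    apply div_nonneg (mul_nonneg (by linarith) (by nlinarith)) (by positivity)
  have hcast : (((d * (i - 1) + i.choose 2 + 1 : ℕ)) : ℝ) =
      ((d : ℝ) * ((i : ℝ) - 1) / i + ((i : ℝ) - 1) / 2 + 1 / i) * i := by
    push_cast [Nat.cast_sub hi, Nat.cast_choose_two]
    field_simp
  calc c ^ i * q ^ (d * (i - 1) + i.choose 2 + 1)
      = (c * q ^ ((d : ℝ) * ((i : ℝ) - 1) / i + ((i : ℝ) - 1) / 2 + 1 / i)) ^ i := by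
        rw [mul_pow, ← Real.rpow_natCast q, hcast, Real.rpow_mul (by linarith), Real.rpow_natCast]
    _ ≤ n ^ i := pow_le_pow_left₀ (by positivity)
        ((mul_le_mul_of_nonneg_left (Real.rpow_le_rpow_of_exponent_le hq hexp) hc).trans h) i

lemma orthoTuples_eq_card {F : Type} [Field F] [Fintype F] [DecidableEq F] {d : ℕ}
    (E : Finset (Fin d → F)) (k : ℕ) : orthoTuples E k = #(orthoTupleFinset E k) := by
  rw [orthoTuples, Nat.card_eq_fintype_card, Fintype.card_subtype]
  rfl

lemma le_of_choose_two_lt {k d : ℕ} (h : k.choose 2 < d) : k ≤ d := by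
  rcases k with _ | k
  · exact Nat.zero_le _
  · have : (k + 1).choose 2 = k + k.choose 2 := by simp [Nat.choose_succ_succ']
    omega

lemma mul_rpow_neg_choose_two {q : ℝ} (hq : 0 ≤ q) (x : ℝ) (k : ℕ) :
    x * q ^ (-((k : ℝ) * ((k : ℝ) - 1) / 2)) = x / q ^ k.choose 2 := by
  rw [Real.rpow_neg hq, ← Nat.cast_choose_two, Real.rpow_natCast, div_eq_mul_inv]

theorem stmt_0 :
    ∀ ε : ℝ, 0 < ε → ∃ C : ℝ, 0 < C ∧ ∃ Q : ℕ,
      ∀ (F : Type) [Field F] [Fintype F] (d k : ℕ) (E : Finset (Fin d → F)),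
        Q ≤ Fintype.card F → 2 ≤ d → 0 < k * (k - 1) / 2 → k * (k - 1) / 2 < d →
        C * (Fintype.card F : ℝ) ^
            ((d : ℝ) * ((k : ℝ) - 1) / k + ((k : ℝ) - 1) / 2 + 1 / k) ≤ E.card →
        |(orthoTuples E k : ℝ) -
            (E.card : ℝ) ^ k * (Fintype.card F : ℝ) ^ (-(((k : ℝ) * ((k : ℝ) - 1)) / 2))| ≤
          ε * ((E.card : ℝ) ^ k * (Fintype.card F : ℝ) ^ (-(((k : ℝ) * ((k : ℝ) - 1)) / 2))) := by
  intro ε hε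
  obtain ⟨μ, hμ0, hμ1, hμε⟩ : ∃ μ : ℝ, 0 < μ ∧ μ ≤ 1 ∧ μ ≤ ε :=
    ⟨min ε 1, lt_min hε one_pos, min_le_right _ _, min_le_left _ _⟩
  refine ⟨4 / μ, by positivity, 0, fun F _ _ d k E _ hd hk hkd hsize => ?_⟩
  classical
  rw [← Nat.choose_two_right] at hk hkd
  have hk2 : 2 ≤ k := not_lt.1 fun h => hk.ne' (Nat.choose_eq_zero_of_lt h)
  have hq : (1 : ℝ) ≤ Fintype.card F := by exact_mod_cast Fintype.card_pos
  have hmain := abs_card_orthoTupleFinset_sub_le (k := k) hμ0 hμ1 E (by omega)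
    (by simpa using le_of_choose_two_lt hkd) fun i hi hik => by
      rw [Fintype.card_fin]
      exact pow_le_pow_of_rpow_le hq (by positivity) (by omega) (by omega) hik hsize
  rw [orthoTuples_eq_card, mul_rpow_neg_choose_two (by positivity)]
  refine hmain.trans (mul_le_mul_of_nonneg_right ?_ (by positivity))
  have : 0 ≤ 2 / (2 : ℝ) ^ k := by positivity
  nlinarith
end

section
/- Let q = p^2 with p ≡ 3 (mod 4) a prime power such that (p+1)/4 is an odd integer. Then for every d ≥ 3 there exists a set E ⊆ F_q^d with |E| ≥ c q^{d/2 + 1} for some absolute constant c > 0 such that x · y ≠ 0 for all x, y ∈ E. -/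
/-!
Let `q = p ^ 2 = |F|`, let `K ⊆ F` be the subfield with `p` elements and `χ x = x ^ M` with
`M = (q - 1) / 4 = (p - 1) (p + 1) / 4`, an even multiple of `p - 1`. Then `χ = 1` on the nonzero
fourth powers `A` and on `Kˣ`, while `χ (γ ^ 2) = -1` for a non-square `γ`.
The vectors `a • (1, s)` with `a ∈ A` and `s` a nonzero square of `K` have pairwise dot products
`a a' (1 + s s')`, on which `χ = 1` because `-1` is not a square in `K` (`p ≡ 3 mod 4`); the
vectors `γ b • (1, w)` with `b ∈ A` and `w ∈ K ^ (d - 3)` have pairwise dot products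
`γ² b b' (1 + w ⬝ w')`, which are `0` or have `χ = -1`. Since `χ (-x) = χ x`, no dot product of
two concatenations of such vectors vanishes, and there are `|A|² (p - 1) / 2 p ^ (d - 3)` of them,
at least `p ^ (d + 2) / 256`.
-/

open Finset Matrix Function Polynomial
open scoped Pointwise

section Cone

variable {R : Type*} [CommRing R] {k : ℕ}

theorem smul_cons_one_dotProduct_smul_cons_one (c c' : R) (w w' : Fin k → R) :
    (c • Fin.cons 1 w : Fin (k + 1) → R) ⬝ᵥ (c' • Fin.cons 1 w') = c * c' * (1 + w ⬝ᵥ w') := by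
  rw [smul_dotProduct, dotProduct_smul, smul_eq_mul, smul_eq_mul]
  change c * (c' * (vecCons 1 w ⬝ᵥ vecCons 1 w')) = _
  rw [cons_dotProduct_cons]
  ring

variable [DecidableEq R]

def coneOver (C : Finset R) (W : Finset (Fin k → R)) : Finset (Fin (k + 1) → R) :=
  (C ×ˢ W).image fun cw => cw.1 • Fin.cons 1 cw.2

theorem card_coneOver [IsDomain R] {C : Finset R} (hC : 0 ∉ C) (W : Finset (Fin k → R)) :
    #(coneOver C W) = #C * #W := by
  rw [coneOver, card_image_of_injOn, card_product]
  rintro ⟨c, w⟩ hcw ⟨c', w'⟩ - h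
  have hc : c = c' := by simpa using congrFun h 0
  subst hc
  have hc0 : c ≠ 0 := fun h0 => hC (h0 ▸ (mem_product.1 hcw).1)
  refine Prod.ext rfl (funext fun i => mul_left_cancel₀ hc0 ?_)
  simpa using congrFun h i.succ

end Cone

theorem Fin.injective2_append {α : Type*} {m n : ℕ} :
    Injective2 (Fin.append : (Fin m → α) → (Fin n → α) → Fin (m + n) → α) :=
  fun a₁ a₂ b₁ b₂ h =>
    Prod.ext_iff.1 ((Fin.appendEquiv m n).injective (a₁ := (a₁, b₁)) (a₂ := (a₂, b₂)) h)

section Append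

variable {R : Type*} [CommSemiring R] {m n : ℕ}

theorem append_dotProduct_append (x x' : Fin m → R) (y y' : Fin n → R) :
    Fin.append x y ⬝ᵥ Fin.append x' y' = x ⬝ᵥ x' + y ⬝ᵥ y' := by
  simp [dotProduct, Fin.sum_univ_add]

theorem dotProduct_ne_zero_of_mem_image₂_append [DecidableEq R] {E₁ : Finset (Fin m → R)}
    {E₂ : Finset (Fin n → R)} {P Q : Set R} (h₁ : ∀ x ∈ E₁, ∀ y ∈ E₁, x ⬝ᵥ y ∈ P)
    (h₂ : ∀ x ∈ E₂, ∀ y ∈ E₂, x ⬝ᵥ y ∈ Q) (hPQ : ∀ a ∈ P, ∀ b ∈ Q, a + b ≠ 0)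
    {x y : Fin (m + n) → R} (hx : x ∈ image₂ Fin.append E₁ E₂) (hy : y ∈ image₂ Fin.append E₁ E₂) :
    x ⬝ᵥ y ≠ 0 := by
  obtain ⟨x₁, hx₁, x₂, hx₂, rfl⟩ := mem_image₂.1 hx
  obtain ⟨y₁, hy₁, y₂, hy₂, rfl⟩ := mem_image₂.1 hy
  rw [append_dotProduct_append]
  exact hPQ _ (h₁ _ hx₁ _ hy₁) _ (h₂ _ hx₂ _ hy₂)

end Append

section Powers

variable {R : Type*} [CommRing R] [DecidableEq R]

def nonzeroPowers (s : Finset R) (k : ℕ) : Finset R := (s.erase 0).image (· ^ k)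

theorem mem_nonzeroPowers {s : Finset R} {k : ℕ} {a : R} :
    a ∈ nonzeroPowers s k ↔ ∃ b ∈ s, b ≠ 0 ∧ b ^ k = a := by
  simp [nonzeroPowers, and_comm, and_left_comm]

theorem pred_card_le_mul_card_nonzeroPowers [IsDomain R] (s : Finset R) {k : ℕ} (hk : 0 < k) :
    #s - 1 ≤ k * #(nonzeroPowers s k) := by
  refine pred_card_le_card_erase.trans (card_le_mul_card_image _ k fun c _ => ?_)
  calc #{x ∈ s.erase 0 | x ^ k = c} ≤ #(nthRootsFinset k c) :=
        card_le_card fun x hx => (mem_nthRootsFinset hk c).2 (mem_filter.1 hx).2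
    _ ≤ Multiset.card (nthRoots k c) := by
        rw [nthRootsFinset_def]; exact Multiset.toFinset_card_le _
    _ ≤ k := card_nthRoots k c

end Powers

theorem add_ne_zero_of_pow_eq_neg_one_of_pow_eq_one {R : Type*} [Ring R] {M : ℕ}
    (hR : (-1 : R) ≠ 1) (hM : Even M) (hM0 : M ≠ 0) {x y : R} (hx : x = 0 ∨ x ^ M = -1)
    (hy : y ^ M = 1) : x + y ≠ 0 := by
  intro h
  rw [eq_neg_of_add_eq_zero_left h, neg_eq_zero] at hx
  rcases hx with rfl | hx
  · rw [zero_pow hM0] at hy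
    exact hR (by rw [← hy, neg_zero])
  · rw [hM.neg_pow, hy] at hx
    exact hR hx.symm

namespace Subfield

variable {F : Type*} [Field F] [Finite F] (K : Subfield F)

theorem pow_eq_one_of_mem {M : ℕ} (hM : Nat.card K - 1 ∣ M) {t : F} (ht : t ∈ K) (ht0 : t ≠ 0) :
    t ^ M = 1 := by
  have := Fintype.ofFinite K
  obtain ⟨m, rfl⟩ := hM
  have h := FiniteField.pow_card_sub_one_eq_one (⟨t, ht⟩ : K) fun h => ht0 (congrArg Subtype.val h)
  rw [Fintype.card_eq_nat_card] at h
  rw [pow_mul, show t ^ (Nat.card K - 1) = 1 by simpa using congrArg Subtype.val h, one_pow]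

theorem sq_ne_neg_one_of_mem (hK : Nat.card K % 4 = 3) {u : F} (hu : u ∈ K) : u ^ 2 ≠ -1 := by
  have := Fintype.ofFinite K
  intro h
  refine (FiniteField.isSquare_neg_one_iff (F := K)).1 ⟨⟨u, hu⟩, Subtype.ext ?_⟩
    (by rwa [Fintype.card_eq_nat_card])
  simp [← h, sq]

end Subfield

namespace FiniteField

variable {F : Type*} [Field F] [Fintype F]

theorem exists_subfield_natCard_eq {p n : ℕ} (hp : IsPrimePow p) (hF : Fintype.card F = p ^ n) :
    ∃ K : Subfield F, Nat.card K = p := by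
  obtain ⟨r, k, hr, hk, rfl⟩ := hp
  have hr : Fact r.Prime := ⟨Nat.prime_iff.2 hr⟩
  rw [← pow_mul] at hF
  have := charP_of_card_eq_prime_pow hF
  let := ZMod.algebra F r
  have hfin : Module.finrank (ZMod r) F = k * n :=
    Nat.pow_right_injective hr.out.two_le <| show r ^ _ = r ^ _ by
      rw [FiniteField.pow_finrank_eq_card, hF]
  obtain ⟨φ⟩ := nonempty_algHom_of_finrank_dvd (K := GaloisField r k) (L := F)
    (by rw [GaloisField.finrank r hk.ne', hfin]; exact dvd_mul_right _ _)
  refine ⟨φ.toRingHom.fieldRange, ?_⟩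
  rw [← GaloisField.card r k hk.ne', ← Nat.card_range_of_injective φ.injective]
  rfl

theorem exists_ne_zero_pow_card_div_two_eq_neg_one (hF : ringChar F ≠ 2) :
    ∃ γ : F, γ ≠ 0 ∧ γ ^ (Fintype.card F / 2) = -1 := by
  obtain ⟨γ, hγ⟩ := exists_nonsquare hF
  have hγ0 : γ ≠ 0 := by rintro rfl; exact hγ ⟨0, by simp⟩
  refine ⟨γ, hγ0, (pow_dichotomy hF hγ0).resolve_left fun h => hγ ?_⟩
  exact (isSquare_iff hF hγ0).2 h

end FiniteField

section Construction

variable {F : Type*} [Field F] [Fintype F] [DecidableEq F] (K : Subfield F)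
  [DecidablePred (· ∈ K)]

def subfieldCone (γ : F) (k : ℕ) : Finset (Fin (k + 1) → F) :=
  coneOver (γ • nonzeroPowers univ 4) (Fintype.piFinset fun _ : Fin k => {x | x ∈ K})

def squareCone : Finset (Fin 2 → F) :=
  coneOver (nonzeroPowers univ 4) (Fintype.piFinset fun _ : Fin 1 => nonzeroPowers {x | x ∈ K} 2)

def nonorthogonalSet (γ : F) (k : ℕ) : Finset (Fin (k + 1 + 2) → F) :=
  image₂ Fin.append (subfieldCone K γ k) (squareCone K)

theorem pow_add_five_le_card_nonorthogonalSet {p : ℕ} (hF : Fintype.card F = p ^ 2)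
    (hK : Nat.card K = p) {γ : F} (hγ : γ ≠ 0) (k : ℕ) :
    p ^ (k + 5) ≤ 256 * #(nonorthogonalSet K γ k) := by
  have hS : #({x | x ∈ K} : Finset F) = p := by
    rw [← hK, Nat.card_eq_fintype_card, Fintype.card_subtype]
  have hA0 : (0 : F) ∉ nonzeroPowers univ 4 := by simp [mem_nonzeroPowers]
  have hγA0 : (0 : F) ∉ γ • nonzeroPowers univ 4 := by
    rwa [← smul_zero γ, smul_mem_smul_finset_iff₀ hγ]
  have hA : p ^ 2 ≤ 8 * #(nonzeroPowers (univ : Finset F) 4) := by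
    have h := pred_card_le_mul_card_nonzeroPowers (univ : Finset F) (k := 4) (by norm_num)
    have h2 : 2 ≤ Fintype.card F := Fintype.one_lt_card
    rw [card_univ] at h
    omega
  have hSQ : p ≤ 4 * #(nonzeroPowers ({x | x ∈ K} : Finset F) 2) := by
    have h := pred_card_le_mul_card_nonzeroPowers ({x | x ∈ K} : Finset F) (k := 2) (by norm_num)
    have h2 : 2 ≤ p := hK ▸ Finite.one_lt_card
    omega
  rw [nonorthogonalSet, card_image₂ Fin.injective2_append, subfieldCone, squareCone,
    card_coneOver hγA0, card_coneOver hA0, card_smul_finset₀ hγ, Fintype.card_piFinset_const,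
    Fintype.card_piFinset_const, hS, pow_one]
  calc p ^ (k + 5) = p ^ 2 * p ^ 2 * p * p ^ k := by ring
    _ ≤ 8 * #(nonzeroPowers univ 4) * (8 * #(nonzeroPowers univ 4)) *
          (4 * #(nonzeroPowers {x | x ∈ K} 2)) * p ^ k := by gcongr
    _ = _ := by ring

variable {K} {M : ℕ}

theorem pow_eq_one_of_mem_nonzeroPowers_univ {k : ℕ} (hM : k * M = Fintype.card F - 1) {a : F}
    (ha : a ∈ nonzeroPowers univ k) : a ^ M = 1 := by
  obtain ⟨b, -, hb, rfl⟩ := mem_nonzeroPowers.1 ha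
  rw [← pow_mul, hM, FiniteField.pow_card_sub_one_eq_one b hb]

theorem dotProduct_eq_zero_or_pow_eq_neg_one (hM : 4 * M = Fintype.card F - 1)
    (hMK : Nat.card K - 1 ∣ M) {γ : F} (hγ : γ ^ (2 * M) = -1) {k : ℕ}
    {x y : Fin (k + 1) → F} (hx : x ∈ subfieldCone K γ k) (hy : y ∈ subfieldCone K γ k) :
    x ⬝ᵥ y = 0 ∨ (x ⬝ᵥ y) ^ M = -1 := by
  obtain ⟨⟨c, w⟩, hcw, rfl⟩ := mem_image.1 hx
  obtain ⟨⟨c', w'⟩, hcw', rfl⟩ := mem_image.1 hy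
  simp only [mem_product, Fintype.mem_piFinset, mem_filter, mem_univ, true_and] at hcw hcw'
  obtain ⟨⟨a, ha, rfl⟩, hw⟩ := And.imp_left mem_smul_finset.1 hcw
  obtain ⟨⟨a', ha', rfl⟩, hw'⟩ := And.imp_left mem_smul_finset.1 hcw'
  rw [smul_cons_one_dotProduct_smul_cons_one]
  have ht : 1 + w ⬝ᵥ w' ∈ K := add_mem K.one_mem (sum_mem fun i _ => mul_mem (hw i) (hw' i))
  by_cases h0 : 1 + w ⬝ᵥ w' = 0
  · simp [h0]
  right
  rw [smul_eq_mul, smul_eq_mul, show γ * a * (γ * a') = γ ^ 2 * a * a' by ring, mul_pow, mul_pow,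
    mul_pow, ← pow_mul, hγ, pow_eq_one_of_mem_nonzeroPowers_univ hM ha,
    pow_eq_one_of_mem_nonzeroPowers_univ hM ha', K.pow_eq_one_of_mem hMK ht h0]
  ring

theorem dotProduct_pow_eq_one (hM : 4 * M = Fintype.card F - 1) (hMK : Nat.card K - 1 ∣ M)
    (hK : Nat.card K % 4 = 3) {x y : Fin 2 → F} (hx : x ∈ squareCone K) (hy : y ∈ squareCone K) :
    (x ⬝ᵥ y) ^ M = 1 := by
  obtain ⟨⟨a, v⟩, hav, rfl⟩ := mem_image.1 hx
  obtain ⟨⟨a', v'⟩, hav', rfl⟩ := mem_image.1 hy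
  simp only [mem_product, Fintype.mem_piFinset] at hav hav'
  obtain ⟨u, hu, -, hu2⟩ := mem_nonzeroPowers.1 (hav.2 0)
  obtain ⟨u', hu', -, hu2'⟩ := mem_nonzeroPowers.1 (hav'.2 0)
  simp only [mem_filter, mem_univ, true_and] at hu hu'
  have hvv : 1 + v ⬝ᵥ v' = 1 + (u * u') ^ 2 := by
    rw [dotProduct, Fin.sum_univ_one, ← hu2, ← hu2']; ring
  have ht : 1 + v ⬝ᵥ v' ∈ K := hvv ▸ add_mem K.one_mem (pow_mem (mul_mem hu hu') 2)
  have h0 : 1 + v ⬝ᵥ v' ≠ 0 := by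
    rw [hvv]
    exact fun h => K.sq_ne_neg_one_of_mem hK (mul_mem hu hu') (eq_neg_of_add_eq_zero_right h)
  rw [smul_cons_one_dotProduct_smul_cons_one, mul_pow, mul_pow,
    pow_eq_one_of_mem_nonzeroPowers_univ hM hav.1, pow_eq_one_of_mem_nonzeroPowers_univ hM hav'.1,
    K.pow_eq_one_of_mem hMK ht h0, one_mul, one_mul]

theorem dotProduct_ne_zero_of_mem_nonorthogonalSet (hneg : (-1 : F) ≠ 1)
    (hM : 4 * M = Fintype.card F - 1) (hMK : Nat.card K - 1 ∣ M) (hK : Nat.card K % 4 = 3)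
    {γ : F} (hγ : γ ^ (2 * M) = -1) {k : ℕ} {x y : Fin (k + 1 + 2) → F}
    (hx : x ∈ nonorthogonalSet K γ k) (hy : y ∈ nonorthogonalSet K γ k) : x ⬝ᵥ y ≠ 0 := by
  have hMeven : Even M := even_iff_two_dvd.2 ((show 2 ∣ Nat.card K - 1 by omega).trans hMK)
  have hM0 : M ≠ 0 := by have := Fintype.one_lt_card (α := F); omega
  exact dotProduct_ne_zero_of_mem_image₂_append (P := {t | t = 0 ∨ t ^ M = -1})
    (Q := {t | t ^ M = 1}) (fun _ hx _ hy => dotProduct_eq_zero_or_pow_eq_neg_one hM hMK hγ hx hy)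
    (fun _ hx _ hy => dotProduct_pow_eq_one hM hMK hK hx hy)
    (fun _ ha _ hb => add_ne_zero_of_pow_eq_neg_one_of_pow_eq_one hneg hMeven hM0 ha hb) hx hy

end Construction

theorem sq_rpow_div_two_add_one {x : ℝ} (hx : 0 ≤ x) (n : ℕ) :
    (x ^ 2) ^ ((n : ℝ) / 2 + 1) = x ^ (n + 2) := by
  rw [← Real.rpow_natCast x 2, ← Real.rpow_mul hx, ← Real.rpow_natCast]
  congr 1
  push_cast
  ring

theorem stmt_12 :
    ∃ c : ℝ, 0 < c ∧
      ∀ (p : ℕ), IsPrimePow p → p % 4 = 3 → Odd ((p + 1) / 4) →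
      ∀ (F : Type) [Field F] [Fintype F], Fintype.card F = p ^ 2 →
      ∀ d : ℕ, 3 ≤ d →
        ∃ E : Finset (Fin d → F),
          c * (Fintype.card F : ℝ) ^ ((d : ℝ) / 2 + 1) ≤ E.card ∧
          ∀ x ∈ E, ∀ y ∈ E, ∑ m, x m * y m ≠ 0 := by
  refine ⟨1 / 256, by norm_num, fun p hp hp4 _ F _ _ hF d hd => ?_⟩
  classical
  obtain ⟨K, hK⟩ := FiniteField.exists_subfield_natCard_eq hp hF
  have hchar : ringChar F ≠ 2 := fun h => by
    have := FiniteField.even_card_iff_char_two.1 h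
    rw [hF, Nat.pow_mod] at this
    simp [show p % 2 = 1 by omega] at this
  obtain ⟨γ, hγ0, hγ⟩ := FiniteField.exists_ne_zero_pow_card_div_two_eq_neg_one hchar
  obtain ⟨M, hM, hMp⟩ : ∃ M, 4 * M = Fintype.card F - 1 ∧ p - 1 ∣ M := by
    refine ⟨(p - 1) * ((p + 1) / 4), ?_, dvd_mul_right _ _⟩
    obtain ⟨j, rfl⟩ : ∃ j, p = 4 * j + 3 := ⟨p / 4, by omega⟩
    rw [hF, show (4 * j + 3 + 1) / 4 = j + 1 by omega, show 4 * j + 3 - 1 = 4 * j + 2 by omega]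
    ring_nf
    omega
  obtain ⟨k, rfl⟩ : ∃ k, d = k + 1 + 2 := ⟨d - 3, by omega⟩
  refine ⟨nonorthogonalSet K γ k, ?_, fun x hx y hy =>
    dotProduct_ne_zero_of_mem_nonorthogonalSet (Ring.neg_one_ne_one_of_char_ne_two hchar) hM
      (hK ▸ hMp) (by rwa [hK])
      (by rwa [show 2 * M = Fintype.card F / 2 by omega]) hx hy⟩
  have hcard := pow_add_five_le_card_nonorthogonalSet K hF hK hγ0 k
  rw [hF, Nat.cast_pow, sq_rpow_div_two_add_one (Nat.cast_nonneg p), div_mul_eq_mul_div,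
    one_mul, div_le_iff₀ (by norm_num), mul_comm]
  exact_mod_cast hcard
end
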